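/- For each c > 0, the sub-level set Ω_c = {ξ̄ ∈ Ω : E(ξ̄) ≤ c} of the Stefan-Dirichlet potential E is compact; in particular E attains its minimum on Ω. -/

import Mathlib

noncomputable def F (ξ : ℝ) : ℝ :=
  (1 / Real.sqrt Real.pi) * ∫ s in (0:ℝ)..ξ, Real.exp (-s ^ 2 / 4)

/-- Extension of `ξ = (ξ₁, …, ξₘ)` to indices `0, …, m+1`, with the convention
`ξ_{m+1} = 0` (the value at index `0` is irrelevant: there `F(ξ₀/a₀) = F(+∞) = 1`). -/
def ext (m : ℕ) (ξ : Fin m → ℝ) : ℕ → ℝ :=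
  fun i => if h : 1 ≤ i ∧ i ≤ m then ξ ⟨i - 1, by omega⟩ else 0

/-- The Stefan–Dirichlet potential
`E(ξ̄) = -∑_{i=0}^m kᵢ(u_{i+1}-uᵢ) ln(F(ξᵢ/aᵢ) - F(ξ_{i+1}/aᵢ)) + ∑_{i=1}^m dᵢξᵢ²/4`,
with conventions `F(ξ₀/a₀) = 1`, `ξ_{m+1} = 0` (so `F(ξ_{m+1}/aₘ) = 0`). -/
noncomputable def E (m : ℕ) (u k a d : ℕ → ℝ) (ξ : Fin m → ℝ) : ℝ :=
  (∑ i ∈ Finset.range (m + 1),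
    -(k i * (u (i + 1) - u i) *
      Real.log ((if i = 0 then 1 else F (ext m ξ i / a i)) - F (ext m ξ (i + 1) / a i))))
  + ∑ i ∈ Finset.Icc 1 m, d i * (ext m ξ i) ^ 2 / 4

/-- The domain `Ω = {ξ₁ > ξ₂ > ⋯ > ξₘ > 0}`. -/
def Omega (m : ℕ) : Set (Fin m → ℝ) := {ξ | StrictAnti ξ ∧ ∀ i, 0 < ξ i}

/-!
On `Ω` the argument of every logarithm in `E` lies in `(0, 1]` and the quadratic terms are
nonnegative, so on a sublevel set `{E ≤ c}` each single term is at most `c`. For `i ≥ 1` the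
coefficient `kᵢ(uᵢ₊₁ - uᵢ)` is positive, hence the gaps `F(ξᵢ/aᵢ) - F(ξᵢ₊₁/aᵢ)` stay above
`exp(-c / (kᵢ(uᵢ₊₁ - uᵢ)))`; and `ξ₁` is bounded, by the term `i = 0` and `F → 1` when `u₀ < u₁`, by
`d₁ξ₁²/4` when `u₀ = u₁`. These bounds cut out a compact subset of `Ω`, on which `E` is
continuous, so the sublevel set is compact; a minimiser of `E` over a nonempty sublevel set
minimises it over all of `Ω`.
-/

section

open MeasureTheory Filter Real Set Topology

lemma continuous_gaussian_quarter : Continuous fun s : ℝ => exp (-s ^ 2 / 4) := by fun_prop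

lemma integrableOn_gaussian_quarter_Ioi (T : ℝ) :
    IntegrableOn (fun s : ℝ => exp (-s ^ 2 / 4)) (Ioi T) := by
  simpa [neg_div, div_eq_inv_mul] using
    (integrable_exp_neg_mul_sq (b := 1 / 4) (by norm_num)).integrableOn (s := Ioi T)

lemma integral_gaussian_quarter_Ioi : ∫ s in Ioi (0 : ℝ), exp (-s ^ 2 / 4) = √π := by
  have h := integral_gaussian_Ioi (1 / 4)
  rw [show π / (1 / 4) = 2 ^ 2 * π by ring, sqrt_mul (by positivity), sqrt_sq (by norm_num)] at h
  simpa [neg_div, div_eq_inv_mul] using h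

lemma continuous_F : Continuous F :=
  continuous_const.mul
    (intervalIntegral.continuous_primitive (continuous_gaussian_quarter.intervalIntegrable) 0)

lemma F_strictMono : StrictMono F := by
  intro x y hxy
  have hg := continuous_gaussian_quarter.intervalIntegrable (μ := volume)
  have hdiff : F y - F x = (1 / √π) * ∫ s in x..y, exp (-s ^ 2 / 4) := by
    rw [F, F, ← mul_sub, intervalIntegral.integral_interval_sub_left (hg 0 y) (hg 0 x)]
  have hpos : 0 < ∫ s in x..y, exp (-s ^ 2 / 4) :=
    intervalIntegral.intervalIntegral_pos_of_pos (hg x y) (fun s => exp_pos _) hxy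
  have : 0 < F y - F x := hdiff ▸ mul_pos (by positivity) hpos
  linarith

lemma F_zero : F 0 = 0 := by simp [F]

lemma F_nonneg {x : ℝ} (hx : 0 ≤ x) : 0 ≤ F x :=
  F_zero ▸ F_strictMono.monotone hx

lemma tendsto_F_atTop : Tendsto F atTop (𝓝 1) := by
  have h := (intervalIntegral_tendsto_integral_Ioi 0 (integrableOn_gaussian_quarter_Ioi 0)
    tendsto_id).const_mul (1 / √π)
  rwa [integral_gaussian_quarter_Ioi, one_div_mul_cancel (sqrt_pos.2 pi_pos).ne'] at h

lemma F_lt_one (x : ℝ) : F x < 1 :=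
  (F_strictMono (lt_add_one x)).trans_le (F_strictMono.monotone.ge_of_tendsto tendsto_F_atTop _)

end

lemma ext_of_mem {m i : ℕ} (ξ : Fin m → ℝ) (h1 : 1 ≤ i) (h2 : i ≤ m) :
    ext m ξ i = ξ ⟨i - 1, by omega⟩ := dif_pos ⟨h1, h2⟩

lemma ext_succ_self (m : ℕ) (ξ : Fin m → ℝ) : ext m ξ (m + 1) = 0 := dif_neg (by omega)

lemma continuous_ext (m i : ℕ) : Continuous fun ξ : Fin m → ℝ => ext m ξ i := by
  unfold ext
  split_ifs
  exacts [continuous_apply _, continuous_const]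

lemma ext_nonneg {m : ℕ} {ξ : Fin m → ℝ} (hξ : ξ ∈ Omega m) (i : ℕ) : 0 ≤ ext m ξ i := by
  unfold ext
  split_ifs
  exacts [(hξ.2 _).le, le_rfl]

lemma mem_Omega_iff_ext {m : ℕ} {ξ : Fin m → ℝ} :
    ξ ∈ Omega m ↔ ∀ i, 1 ≤ i → i ≤ m → ext m ξ (i + 1) < ext m ξ i := by
  constructor
  · rintro ⟨hanti, hpos⟩ i h1 h2
    rcases h2.lt_or_eq with h2 | rfl
    · rw [ext_of_mem ξ h1 h2.le, ext_of_mem ξ (by omega) h2]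
      exact hanti (Fin.mk_lt_mk.2 (by omega))
    · rw [ext_succ_self, ext_of_mem ξ h1 le_rfl]
      exact hpos _
  · intro h
    cases m with
    | zero => exact ⟨fun i => i.elim0, fun i => i.elim0⟩
    | succ n =>
      have hanti : StrictAnti ξ := Fin.strictAnti_iff_succ_lt.2 fun i => by
        have := h (i + 1) (by omega) (by omega)
        rwa [ext_of_mem ξ (by omega) (by omega), ext_of_mem ξ (by omega) (by omega)] at this
      have hlast : 0 < ξ (Fin.last n) := by
        have := h (n + 1) (by omega) le_rfl
        rwa [ext_succ_self, ext_of_mem ξ (by omega) le_rfl] at this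
      exact ⟨hanti, fun i => hlast.trans_le (hanti.antitone (Fin.le_last i))⟩

lemma Omega_nonempty (m : ℕ) : (Omega m).Nonempty := by
  refine ⟨fun j => (m : ℝ) - j, fun p q hpq => ?_, fun j => ?_⟩
  · have : (p : ℝ) < q := by exact_mod_cast hpq
    simp only
    linarith
  · have : (j : ℝ) < m := by exact_mod_cast j.isLt
    simp only
    linarith

-- the argument `F(ξᵢ/aᵢ) - F(ξᵢ₊₁/aᵢ)` of the `i`-th logarithm in `E`
noncomputable def gap (m : ℕ) (a : ℕ → ℝ) (ξ : Fin m → ℝ) (i : ℕ) : ℝ :=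
  (if i = 0 then 1 else F (ext m ξ i / a i)) - F (ext m ξ (i + 1) / a i)

section Gap

variable {m : ℕ} {a : ℕ → ℝ} {ξ : Fin m → ℝ} {i : ℕ}

lemma continuous_gap (m : ℕ) (a : ℕ → ℝ) (i : ℕ) :
    Continuous fun ξ : Fin m → ℝ => gap m a ξ i := by
  unfold gap
  split_ifs
  · exact continuous_const.sub (continuous_F.comp ((continuous_ext m _).div_const _))
  · exact (continuous_F.comp ((continuous_ext m i).div_const _)).sub
      (continuous_F.comp ((continuous_ext m _).div_const _))

lemma gap_pos_iff (hi : 1 ≤ i) (hai : 0 < a i) :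
    0 < gap m a ξ i ↔ ext m ξ (i + 1) < ext m ξ i := by
  rw [gap, if_neg (by omega), sub_pos, F_strictMono.lt_iff_lt, div_lt_div_iff_of_pos_right hai]

lemma gap_pos (hξ : ξ ∈ Omega m) (hi : i ≤ m) (hai : 0 < a i) : 0 < gap m a ξ i := by
  rcases Nat.eq_zero_or_pos i with rfl | hi0
  · simpa [gap] using F_lt_one _
  · exact (gap_pos_iff hi0 hai).2 (mem_Omega_iff_ext.1 hξ i hi0 hi)

lemma gap_le_one (hξ : ξ ∈ Omega m) (hai : 0 ≤ a i) : gap m a ξ i ≤ 1 := by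
  have hleft : (if i = 0 then 1 else F (ext m ξ i / a i)) ≤ 1 := by
    split_ifs
    exacts [le_rfl, (F_lt_one _).le]
  have hright := F_nonneg (div_nonneg (ext_nonneg hξ (i + 1)) hai)
  rw [gap]
  linarith

lemma mem_Omega_of_gap_pos (ha : ∀ i ≤ m, 0 < a i)
    (h : ∀ i, 1 ≤ i → i ≤ m → 0 < gap m a ξ i) : ξ ∈ Omega m :=
  mem_Omega_iff_ext.2 fun i h1 h2 => (gap_pos_iff h1 (ha i h2)).1 (h i h1 h2)

end Gap

section Energy

open Finset Real

variable {m : ℕ} {u k a d : ℕ → ℝ} {ξ : Fin m → ℝ}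

lemma E_eq_sum_log_gap : E m u k a d ξ =
    (∑ i ∈ range (m + 1), -(k i * (u (i + 1) - u i) * log (gap m a ξ i)))
      + ∑ i ∈ Icc 1 m, d i * ext m ξ i ^ 2 / 4 := rfl

lemma continuousOn_E (ha : ∀ i ≤ m, 0 < a i) : ContinuousOn (E m u k a d) (Omega m) := by
  refine ContinuousOn.add (continuousOn_finsetSum _ fun i hi => ?_)
    (continuous_finsetSum _ fun i _ =>
      (continuous_const.mul ((continuous_ext m i).pow 2)).div_const 4).continuousOn
  have hi : i ≤ m := Nat.lt_succ_iff.1 (mem_range.1 hi)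
  exact (continuousOn_const.mul ((continuous_gap m a i).continuousOn.log
    fun ξ hξ => (gap_pos hξ hi (ha i hi)).ne')).neg

lemma log_term_nonneg (hξ : ξ ∈ Omega m) (hK : ∀ i ≤ m, 0 ≤ k i * (u (i + 1) - u i))
    (ha : ∀ i ≤ m, 0 < a i) {i : ℕ} (hi : i ≤ m) :
    0 ≤ -(k i * (u (i + 1) - u i) * log (gap m a ξ i)) :=
  neg_nonneg.2 (mul_nonpos_of_nonneg_of_nonpos (hK i hi)
    (log_nonpos (gap_pos hξ hi (ha i hi)).le (gap_le_one hξ (ha i hi).le)))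

lemma d_term_nonneg (hd : ∀ i, 1 ≤ i → i ≤ m → 0 ≤ d i) {i : ℕ} (hi : i ∈ Icc 1 m) :
    0 ≤ d i * ext m ξ i ^ 2 / 4 := by
  have := hd i (mem_Icc.1 hi).1 (mem_Icc.1 hi).2
  positivity

lemma log_term_le_E (hξ : ξ ∈ Omega m) (hK : ∀ i ≤ m, 0 ≤ k i * (u (i + 1) - u i))
    (ha : ∀ i ≤ m, 0 < a i) (hd : ∀ i, 1 ≤ i → i ≤ m → 0 ≤ d i) {i : ℕ} (hi : i ≤ m) :
    -(k i * (u (i + 1) - u i) * log (gap m a ξ i)) ≤ E m u k a d ξ := by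
  have hlog := single_le_sum (f := fun i => -(k i * (u (i + 1) - u i) * log (gap m a ξ i)))
    (fun j hj => log_term_nonneg hξ hK ha (Nat.lt_succ_iff.1 (mem_range.1 hj)))
    (mem_range.2 (Nat.lt_succ_of_le hi))
  have hdsum := sum_nonneg fun j hj => d_term_nonneg (ξ := ξ) hd hj
  rw [E_eq_sum_log_gap]
  linarith

lemma d_term_le_E (hξ : ξ ∈ Omega m) (hK : ∀ i ≤ m, 0 ≤ k i * (u (i + 1) - u i))
    (ha : ∀ i ≤ m, 0 < a i) (hd : ∀ i, 1 ≤ i → i ≤ m → 0 ≤ d i) (hm : 1 ≤ m) :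
    d 1 * ext m ξ 1 ^ 2 / 4 ≤ E m u k a d ξ := by
  have hdterm := single_le_sum (f := fun i => d i * ext m ξ i ^ 2 / 4)
    (fun j hj => d_term_nonneg hd hj) (mem_Icc.2 ⟨le_rfl, hm⟩)
  have hlogsum := sum_nonneg fun j hj =>
    log_term_nonneg (u := u) (k := k) hξ hK ha (Nat.lt_succ_iff.1 (mem_range.1 hj))
  rw [E_eq_sum_log_gap]
  linarith

end Energy

lemma exists_forall_le_of_isCompact_sublevel {X α : Type*} [TopologicalSpace X] [LinearOrder α]
    [TopologicalSpace α] [OrderClosedTopology α] {s : Set X} {f : X → α} (hf : ContinuousOn f s)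
    {x₀ : X} (hx₀ : x₀ ∈ s) (hc : IsCompact {x | x ∈ s ∧ f x ≤ f x₀}) :
    ∃ x ∈ s, ∀ y ∈ s, f x ≤ f y := by
  obtain ⟨x, ⟨hxs, -⟩, hmin⟩ := hc.exists_isMinOn ⟨x₀, hx₀, le_rfl⟩ (hf.mono fun _ h => h.1)
  refine ⟨x, hxs, fun y hy => ?_⟩
  rcases le_or_gt (f y) (f x₀) with hy' | hy'
  · exact hmin ⟨hy, hy'⟩
  · exact (hmin ⟨hx₀, le_rfl⟩).trans hy'.le

lemma Real.exp_neg_div_le_of_neg_mul_log_le {K g c : ℝ} (hK : 0 < K) (hg : 0 < g)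
    (h : -(K * Real.log g) ≤ c) : Real.exp (-c / K) ≤ g := by
  rw [← Real.le_log_iff_exp_le hg, div_le_iff₀ hK]
  linarith

section Coercivity

open Filter Real

variable {m : ℕ} {u k a d : ℕ → ℝ}

lemma exists_forall_le_of_E_le (hK : ∀ i ≤ m, 0 ≤ k i * (u (i + 1) - u i))
    (ha : ∀ i ≤ m, 0 < a i) (hd : ∀ i, 1 ≤ i → i ≤ m → 0 ≤ d i)
    (h0 : 0 < k 0 * (u 1 - u 0) ∨ 0 < d 1) (c : ℝ) :
    ∃ R, ∀ ξ ∈ Omega m, E m u k a d ξ ≤ c → ∀ j, ξ j ≤ R := by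
  suffices ∃ R, ∀ ξ ∈ Omega m, E m u k a d ξ ≤ c → 1 ≤ m → ext m ξ 1 ≤ R by
    obtain ⟨R, hR⟩ := this
    refine ⟨R, fun ξ hξ hE j => ?_⟩
    have hm : 1 ≤ m := j.pos
    calc ξ j ≤ ξ ⟨0, hm⟩ := hξ.1.antitone (Nat.zero_le j.val)
      _ = ext m ξ 1 := (ext_of_mem ξ le_rfl hm).symm
      _ ≤ R := hR ξ hξ hE hm
  rcases h0 with hK0 | hd1
  · -- the first gap `1 - F(ξ₁/a₀)` stays away from `0`, while `F → 1`
    obtain ⟨R, hR⟩ := eventually_atTop.1 (tendsto_F_atTop.eventually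
      (lt_mem_nhds (sub_lt_self 1 (exp_pos (-c / (k 0 * (u 1 - u 0)))))))
    refine ⟨R * a 0, fun ξ hξ hE hm => ?_⟩
    have ha0 := ha 0 (Nat.zero_le m)
    have hgap := exp_neg_div_le_of_neg_mul_log_le hK0 (gap_pos hξ (Nat.zero_le m) ha0)
      ((log_term_le_E hξ hK ha hd (Nat.zero_le m)).trans hE)
    have hlt : ext m ξ 1 / a 0 < R := by
      by_contra! hge
      have := hR _ hge
      simp only [gap, if_pos] at hgap
      linarith
    exact ((div_lt_iff₀ ha0).1 hlt).le
  · refine ⟨√(4 * c / d 1), fun ξ hξ hE hm => ?_⟩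
    have hterm := (d_term_le_E hξ hK ha hd hm).trans hE
    refine le_sqrt_of_sq_le ?_
    rw [le_div_iff₀ hd1]
    linarith

lemma isCompact_sublevel_E (hK : ∀ i ≤ m, 0 ≤ k i * (u (i + 1) - u i))
    (hKpos : ∀ i, 1 ≤ i → i ≤ m → 0 < k i * (u (i + 1) - u i))
    (ha : ∀ i ≤ m, 0 < a i) (hd : ∀ i, 1 ≤ i → i ≤ m → 0 ≤ d i)
    (h0 : 0 < k 0 * (u 1 - u 0) ∨ 0 < d 1) (c : ℝ) :
    IsCompact {ξ | ξ ∈ Omega m ∧ E m u k a d ξ ≤ c} := by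
  obtain ⟨R, hR⟩ := exists_forall_le_of_E_le hK ha hd h0 c
  set G : Set (Fin m → ℝ) := {ξ | ∀ i, 1 ≤ i → i ≤ m →
    exp (-c / (k i * (u (i + 1) - u i))) ≤ gap m a ξ i}
  set B := Set.Icc (0 : Fin m → ℝ) (fun _ => R) ∩ G
  have hB : IsCompact B := by
    refine isCompact_Icc.inter_right ?_
    simp only [G, Set.ofPred_forall]
    exact isClosed_iInter fun i => isClosed_iInter fun _ => isClosed_iInter fun _ =>
      isClosed_le continuous_const (continuous_gap m a i)
  have hBΩ : B ⊆ Omega m := fun ξ hξ =>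
    mem_Omega_of_gap_pos ha fun i h1 h2 => (exp_pos _).trans_le (hξ.2 i h1 h2)
  have hsub : {ξ | ξ ∈ Omega m ∧ E m u k a d ξ ≤ c} = B ∩ E m u k a d ⁻¹' Set.Iic c := by
    ext ξ
    refine ⟨fun ⟨hξ, hE⟩ => ⟨⟨⟨fun j => (hξ.2 j).le, hR ξ hξ hE⟩, fun i h1 h2 => ?_⟩, hE⟩,
      fun ⟨hξ, hE⟩ => ⟨hBΩ hξ, hE⟩⟩
    exact exp_neg_div_le_of_neg_mul_log_le (hKpos i h1 h2) (gap_pos hξ h2 (ha i h2))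
      ((log_term_le_E hξ hK ha hd h2).trans hE)
  rw [hsub]
  exact hB.of_isClosed_subset (((continuousOn_E ha).mono hBΩ).preimage_isClosed_of_isClosed
    hB.isClosed isClosed_Iic) Set.inter_subset_left

end Coercivity

theorem E_coercive_general (m : ℕ) (u k a d : ℕ → ℝ)
    (hk : ∀ i ≤ m, 0 < k i) (ha : ∀ i ≤ m, 0 < a i)
    (hd : ∀ i, 1 ≤ i → i ≤ m → 0 ≤ d i)
    (hu0 : u 0 ≤ u 1) (hu : ∀ i, 1 ≤ i → i ≤ m → u i < u (i + 1))
    (hd1 : u 0 = u 1 → 0 < d 1) :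
    (∀ c : ℝ, 0 < c → IsCompact {ξ | ξ ∈ Omega m ∧ E m u k a d ξ ≤ c}) ∧
    ∃ ξ₀ ∈ Omega m, ∀ ξ ∈ Omega m, E m u k a d ξ₀ ≤ E m u k a d ξ := by
  have hKpos : ∀ i, 1 ≤ i → i ≤ m → 0 < k i * (u (i + 1) - u i) := fun i h1 h2 =>
    mul_pos (hk i h2) (sub_pos.2 (hu i h1 h2))
  have hK : ∀ i ≤ m, 0 ≤ k i * (u (i + 1) - u i)
    | 0, _ => mul_nonneg (hk 0 (Nat.zero_le m)).le (sub_nonneg.2 hu0)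
    | i + 1, hi => (hKpos (i + 1) (Nat.le_add_left 1 i) hi).le
  have h0 : 0 < k 0 * (u 1 - u 0) ∨ 0 < d 1 :=
    hu0.lt_or_eq.imp (fun h => mul_pos (hk 0 (Nat.zero_le m)) (sub_pos.2 h)) hd1
  have hcompact := isCompact_sublevel_E hK hKpos ha hd h0
  obtain ⟨ξ, hξ⟩ := Omega_nonempty m
  exact ⟨fun c _ => hcompact c,
    exists_forall_le_of_isCompact_sublevel (continuousOn_E ha) hξ (hcompact _)⟩

theorem E_coercive (m : ℕ) (hm : 1 ≤ m) (u k a d : ℕ → ℝ)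
    (hk : ∀ i ≤ m, 0 < k i) (ha : ∀ i ≤ m, 0 < a i)
    (hd : ∀ i, 1 ≤ i → i ≤ m → 0 ≤ d i)
    (hu0 : u 0 ≤ u 1) (hu : ∀ i, 1 ≤ i → i ≤ m → u i < u (i + 1))
    (hd1 : u 0 = u 1 → 0 < d 1) :
    (∀ c : ℝ, 0 < c → IsCompact {ξ | ξ ∈ Omega m ∧ E m u k a d ξ ≤ c}) ∧
    ∃ ξ₀ ∈ Omega m, ∀ ξ ∈ Omega m, E m u k a d ξ₀ ≤ E m u k a d ξ :=
  E_coercive_general m u k a d hk ha hd hu0 hu hd1
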